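/- arXiv:2601.15096 — 2 statements merged into one kernel-verified Lean document; each statement's English description precedes it below -/
import Mathlib

section
/- Assume s > 1/2 and let α ∈ (2s−1, 1]. Then there exists a constant C > 0 depending only on d, s, Λ and α such that for every φ ∈ C^1(ℝ^d) with φ and ∇φ bounded and with finite seminorm [φ]_{C^{1,α}(ℝ^d)} = [∇φ]_{C^{0,α}(ℝ^d)}, the values M_ρ^± φ(x) are finite for every x ∈ ℝ^d and for all x, y ∈ ℝ^d one has |M_ρ^± φ(x) − M_ρ^± φ(y)| ≤ C [φ]_{C^{1,α}(ℝ^d)} |x−y|^{1+α−2s} (both for M_ρ^+ and for M_ρ^−). -/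
open MeasureTheory Metric Set
open scoped Classical

noncomputable section

abbrev Ed (d : ℕ) := EuclideanSpace ℝ (Fin d)

/-- `min{|y|^{-d-2s}, ρ^{-d-2s}}`, with the convention that it equals `|y|^{-d-2s}` when `ρ = 0`. -/
def truncKer (d : ℕ) (s ρ : ℝ) (y : Ed d) : ℝ :=
  if ρ = 0 then ‖y‖ ^ (-(d : ℝ) - 2 * s)
  else min (‖y‖ ^ (-(d : ℝ) - 2 * s)) (ρ ^ (-(d : ℝ) - 2 * s))

/-- The kernel class `𝒦_ρ` with ellipticity constants `lam ≤ Lam` and order `2s`. -/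
def KernelClass (d : ℕ) (s lam Lam ρ : ℝ) : Set (Ed d → ℝ) :=
  {K | Measurable K ∧ (∀ y, 0 ≤ K y) ∧
    (∀ y : Ed d, y ≠ 0 → lam * truncKer d s ρ y ≤ K y) ∧
    (∀ r : ℝ, 0 < r →
      ∫⁻ y in ball (0 : Ed d) (2 * r) \ ball 0 r, ENNReal.ofReal (K y) ≤
        ENNReal.ofReal (Lam * r ^ (-(2 * s)))) ∧
    (s = 1 / 2 → ∀ r : ℝ, 0 < r →
      (∫ y in ball (0 : Ed d) (2 * r) \ ball 0 r, K y • y) = (0 : Ed d))}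

/-- The increment `δ_y u (x)`, whose form depends on whether `s < 1/2`, `s = 1/2` or `s > 1/2`. -/
def incr (d : ℕ) (s : ℝ) (u : Ed d → ℝ) (x y : Ed d) : ℝ :=
  if s < 1 / 2 then u (x + y) - u x
  else if s = 1 / 2 then u (x + y) - u x - (if ‖y‖ < 1 then fderiv ℝ u x y else 0)
  else u (x + y) - u x - fderiv ℝ u x y

/-- The linear integro-differential operator `L_K u (x) = ∫ δ_y u(x) K(y) dy`. -/
def opL (d : ℕ) (s : ℝ) (K u : Ed d → ℝ) (x : Ed d) : ℝ :=
  ∫ y, incr d s u x y * K y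

/-- Pucci extremal operator `M_ρ^- u(x) = inf_{K ∈ 𝒦_ρ} L_K u (x)`. -/
def pucciInf (d : ℕ) (s lam Lam ρ : ℝ) (u : Ed d → ℝ) (x : Ed d) : ℝ :=
  sInf ((fun K => opL d s K u x) '' KernelClass d s lam Lam ρ)

/-- Pucci extremal operator `M_ρ^+ u(x) = sup_{K ∈ 𝒦_ρ} L_K u (x)`. -/
def pucciSup (d : ℕ) (s lam Lam ρ : ℝ) (u : Ed d → ℝ) (x : Ed d) : ℝ :=
  sSup ((fun K => opL d s K u x) '' KernelClass d s lam Lam ρ)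

/-- Parabolic distance `d((x,t),(y,τ)) = max{|x-y|, |t-τ|^{1/(2s)}}`. -/
def parDist (d : ℕ) (s : ℝ) (p q : Ed d × ℝ) : ℝ :=
  max ‖p.1 - q.1‖ (|p.2 - q.2| ^ (1 / (2 * s)))

/-- The function `v` that equals the test function `φ` on the test cylinder
`B_ε(x₀) × (t₀-ε, t₀]` and `u` elsewhere. -/
def patchFn (d : ℕ) (u φ : Ed d → ℝ → ℝ) (x₀ : Ed d) (t₀ ε : ℝ) : Ed d → ℝ → ℝ :=
  fun x t => if x ∈ ball x₀ ε ∧ t ∈ Ioc (t₀ - ε) t₀ then φ x t else u x t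

/-- `φ` is an admissible (parabolic) test function on the cylinder `B_ε(x₀) × (t₀-ε, t₀]`:
`C^{1,1}` in space and left-differentiable in time. -/
def IsTestFn (d : ℕ) (φ : Ed d → ℝ → ℝ) (x₀ : Ed d) (t₀ ε : ℝ) : Prop :=
  (∀ t ∈ Ioc (t₀ - ε) t₀, ∀ x ∈ ball x₀ ε, DifferentiableAt ℝ (fun z => φ z t) x) ∧
  (∀ t ∈ Ioc (t₀ - ε) t₀, ∃ L : NNReal,
    LipschitzOnWith L (fun x => fderiv ℝ (fun z => φ z t) x) (ball x₀ ε)) ∧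
  (∀ x ∈ ball x₀ ε, ∀ t ∈ Ioc (t₀ - ε) t₀,
    ∃ D : ℝ, HasDerivWithinAt (fun τ => φ x τ) D (Iic t) t)

/-- Viscosity supersolution of `∂ₜ u + drift·|∇u| − M u ≥ f` in `Ω × I`. -/
def IsViscSuper (d : ℕ) (drift : ℝ) (M : (Ed d → ℝ) → Ed d → ℝ)
    (f : Ed d → ℝ → ℝ) (Ω : Set (Ed d)) (I : Set ℝ) (u : Ed d → ℝ → ℝ) : Prop :=
  LowerSemicontinuousOn (fun p : Ed d × ℝ => u p.1 p.2) (Ω ×ˢ I) ∧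
  ∀ x₀ ∈ Ω, ∀ t₀ ∈ I, ∀ ε : ℝ, 0 < ε → ball x₀ ε ⊆ Ω → Ioc (t₀ - ε) t₀ ⊆ I →
    ∀ φ : Ed d → ℝ → ℝ, IsTestFn d φ x₀ t₀ ε → φ x₀ t₀ = u x₀ t₀ →
      (∀ x ∈ ball x₀ ε, ∀ t ∈ Ioc (t₀ - ε) t₀, φ x t ≤ u x t) →
      f x₀ t₀ ≤
        derivWithin (patchFn d u φ x₀ t₀ ε x₀) (Iic t₀) t₀
          + drift * ‖fderiv ℝ (fun z => patchFn d u φ x₀ t₀ ε z t₀) x₀‖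
          - M (fun z => patchFn d u φ x₀ t₀ ε z t₀) x₀

/-- Viscosity subsolution of `∂ₜ u − drift·|∇u| − M u ≤ f` in `Ω × I`. -/
def IsViscSub (d : ℕ) (drift : ℝ) (M : (Ed d → ℝ) → Ed d → ℝ)
    (f : Ed d → ℝ → ℝ) (Ω : Set (Ed d)) (I : Set ℝ) (u : Ed d → ℝ → ℝ) : Prop :=
  UpperSemicontinuousOn (fun p : Ed d × ℝ => u p.1 p.2) (Ω ×ˢ I) ∧
  ∀ x₀ ∈ Ω, ∀ t₀ ∈ I, ∀ ε : ℝ, 0 < ε → ball x₀ ε ⊆ Ω → Ioc (t₀ - ε) t₀ ⊆ I →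
    ∀ φ : Ed d → ℝ → ℝ, IsTestFn d φ x₀ t₀ ε → φ x₀ t₀ = u x₀ t₀ →
      (∀ x ∈ ball x₀ ε, ∀ t ∈ Ioc (t₀ - ε) t₀, u x t ≤ φ x t) →
      derivWithin (patchFn d u φ x₀ t₀ ε x₀) (Iic t₀) t₀
          - drift * ‖fderiv ℝ (fun z => patchFn d u φ x₀ t₀ ε z t₀) x₀‖
          - M (fun z => patchFn d u φ x₀ t₀ ε z t₀) x₀ ≤ f x₀ t₀


/-! Split `∫ δ_y φ(x) K(y) dy` at `|y| = r` and sum the annulus bound (ii) over dyadic annuli.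
Near the origin `|δ_y φ(x)| ≤ H |y|^{1+α}` with `1 + α > 2s`, far away `|δ_y φ(x)| ≲ |y|` with
`1 < 2s`, so both geometric series converge and `|L_K φ(x)|` is bounded uniformly in `K`.
For the Hölder estimate take `r = |x - z|`: the difference `δ_y φ(x) - δ_y φ(z)` is at most
`2H |y|^{1+α}` inside the ball and, by the mean value inequality, `2H r^α |y|` outside, which
gives `|L_K φ(x) - L_K φ(z)| ≤ C H r^{1+α-2s}` for every `K`; an infimum or supremum of
functions with a common modulus has the same modulus. -/

section ExtremalValues

variable {ι : Type*} {T : Set ι} {F G : ι → ℝ} {M : ℝ}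

lemma csSup_image_le_csSup_image_add (hT : T.Nonempty) (hF : BddAbove (F '' T))
    (h : ∀ k ∈ T, G k ≤ F k + M) : sSup (G '' T) ≤ sSup (F '' T) + M :=
  csSup_le (hT.image G) <| by
    rintro _ ⟨k, hk, rfl⟩
    linarith [h k hk, le_csSup hF ⟨k, hk, rfl⟩]

lemma csInf_image_sub_le_csInf_image (hT : T.Nonempty) (hF : BddBelow (F '' T))
    (h : ∀ k ∈ T, F k ≤ G k + M) : sInf (F '' T) - M ≤ sInf (G '' T) :=
  le_csInf (hT.image G) <| by
    rintro _ ⟨k, hk, rfl⟩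
    linarith [h k hk, csInf_le hF ⟨k, hk, rfl⟩]

lemma abs_csSup_image_sub_le (hM : 0 ≤ M) (hF : BddAbove (F '' T)) (hG : BddAbove (G '' T))
    (h : ∀ k ∈ T, |F k - G k| ≤ M) : |sSup (F '' T) - sSup (G '' T)| ≤ M := by
  rcases T.eq_empty_or_nonempty with rfl | hT
  · simpa using hM
  have hFG := csSup_image_le_csSup_image_add hT hG (F := G) (G := F) (M := M)
    fun k hk => by linarith [(abs_le.1 (h k hk)).2]
  have hGF := csSup_image_le_csSup_image_add hT hF (F := F) (G := G) (M := M)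
    fun k hk => by linarith [(abs_le.1 (h k hk)).1]
  exact abs_sub_le_iff.2 ⟨by linarith, by linarith⟩

lemma abs_csInf_image_sub_le (hM : 0 ≤ M) (hF : BddBelow (F '' T)) (hG : BddBelow (G '' T))
    (h : ∀ k ∈ T, |F k - G k| ≤ M) : |sInf (F '' T) - sInf (G '' T)| ≤ M := by
  rcases T.eq_empty_or_nonempty with rfl | hT
  · simpa using hM
  have hFG := csInf_image_sub_le_csInf_image hT hF (F := F) (G := G) (M := M)
    fun k hk => by linarith [(abs_le.1 (h k hk)).2]
  have hGF := csInf_image_sub_le_csInf_image hT hG (F := G) (G := F) (M := M)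
    fun k hk => by linarith [(abs_le.1 (h k hk)).1]
  exact abs_sub_le_iff.2 ⟨by linarith, by linarith⟩

end ExtremalValues

section TaylorRemainder

variable {E F : Type*} [NormedAddCommGroup E] [NormedSpace ℝ E] [NormedAddCommGroup F]
  [NormedSpace ℝ F] {f : E → F} {H α : ℝ}

lemma norm_taylorRemainder_le_of_holder (hf : Differentiable ℝ f) (hH : 0 ≤ H) (hα : 0 ≤ α)
    (hHol : ∀ x y, ‖fderiv ℝ f x - fderiv ℝ f y‖ ≤ H * ‖x - y‖ ^ α) (x y : E) :
    ‖f (x + y) - f x - fderiv ℝ f x y‖ ≤ H * ‖y‖ ^ (1 + α) := by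
  have hbound : ∀ w ∈ closedBall x ‖y‖, ‖fderiv ℝ f w - fderiv ℝ f x‖ ≤ H * ‖y‖ ^ α :=
    fun w hw => (hHol w x).trans <| by gcongr; exact mem_closedBall_iff_norm.1 hw
  have hmvt := (convex_closedBall x ‖y‖).norm_image_sub_le_of_norm_fderiv_le' (y := x + y)
    (fun w _ => hf w) hbound (mem_closedBall_self (norm_nonneg y)) (by simp)
  rw [add_sub_cancel_left] at hmvt
  rw [Real.rpow_add' (norm_nonneg y) (by linarith), Real.rpow_one]
  linarith

/-- Apply the mean value inequality to `w ↦ f w - f (w + (z - x))` on the segment `[x, x + y]`. -/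
lemma norm_taylorRemainder_sub_le_of_holder (hf : Differentiable ℝ f)
    (hHol : ∀ x y, ‖fderiv ℝ f x - fderiv ℝ f y‖ ≤ H * ‖x - y‖ ^ α) (x z y : E) :
    ‖(f (x + y) - f x - fderiv ℝ f x y) - (f (z + y) - f z - fderiv ℝ f z y)‖ ≤
      2 * H * ‖x - z‖ ^ α * ‖y‖ := by
  set g : E → F := fun w => f w - f (w + (z - x))
  have hg : ∀ w, HasFDerivAt g (fderiv ℝ f w - fderiv ℝ f (w + (z - x))) w := fun w =>
    (hf w).hasFDerivAt.sub ((hf _).hasFDerivAt.comp w ((hasFDerivAt_id w).add_const _))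
  have hg' : ∀ w, ‖fderiv ℝ f w - fderiv ℝ f (w + (z - x))‖ ≤ H * ‖x - z‖ ^ α := fun w => by
    simpa [sub_sub_cancel_left, norm_neg, ← sub_eq_add_neg] using hHol w (w + (z - x))
  have hmvt := (convex_univ (𝕜 := ℝ)).norm_image_sub_le_of_norm_hasFDerivWithin_le' (x := x)
    (y := x + y) (fun w _ => (hg w).hasFDerivWithinAt)
    (fun w _ => (norm_sub_le _ _).trans (add_le_add (hg' w) (hg' x))) trivial trivial
  simp only [g, add_sub_cancel_left, add_sub_cancel, sub_apply] at hmvt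
  convert hmvt using 2
  · abel_nf
  · ring

end TaylorRemainder

lemma tsum_ofReal_mul_rpow_mul_pow {c r a e : ℝ} (hc : 0 ≤ c) (hr : 0 ≤ r) (ha : 0 ≤ a)
    (hae : a ^ e < 1) :
    ∑' k : ℕ, ENNReal.ofReal (c * (r * a ^ k) ^ e) = ENNReal.ofReal (c * r ^ e / (1 - a ^ e)) := by
  have hterm : ∀ k : ℕ, c * (r * a ^ k) ^ e = c * r ^ e * (a ^ e) ^ k := fun k => by
    rw [Real.mul_rpow hr (pow_nonneg ha k), Real.rpow_pow_comm ha, mul_assoc]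
  have hae0 : 0 ≤ a ^ e := Real.rpow_nonneg ha e
  simp_rw [hterm]
  rw [← ENNReal.ofReal_tsum_of_nonneg (fun k => by positivity)
    ((summable_geometric_of_lt_one hae0 hae).mul_left _), tsum_mul_left,
    tsum_geometric_of_lt_one hae0 hae, div_eq_mul_inv]

lemma two_rpow_sub_one_pos {e : ℝ} (he : 0 < e) : 0 < (2 : ℝ) ^ e - 1 :=
  sub_pos.2 (Real.one_lt_rpow one_lt_two he)

lemma one_sub_two_rpow_pos {e : ℝ} (he : e < 0) : 0 < 1 - (2 : ℝ) ^ e :=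
  sub_pos.2 (Real.rpow_lt_one_of_one_lt_of_neg one_lt_two he)

lemma exists_dyadic_scale_of_lt {x r : ℝ} (hx : 0 < x) (hxr : x < r) :
    ∃ k : ℕ, r / 2 * (1 / 2) ^ k ≤ x ∧ x < 2 * (r / 2 * (1 / 2) ^ k) := by
  obtain ⟨n, hn, hn'⟩ := exists_mem_Ioc_zpow (div_pos (hx.trans hxr) hx) one_lt_two
  have hn0 : 0 ≤ n := by
    by_contra! h
    have : (2 : ℝ) ^ (n + 1) ≤ 1 := zpow_le_one_of_nonpos₀ one_le_two (by omega)
    linarith [(one_lt_div hx).2 hxr]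
  lift n to ℕ using hn0
  rw [← Nat.cast_succ, zpow_natCast, div_le_iff₀ hx, pow_succ] at hn'
  rw [zpow_natCast, lt_div_iff₀ hx] at hn
  have hinv : (1 / 2 : ℝ) ^ n * 2 ^ n = 1 := by rw [← mul_pow]; norm_num
  have hpos : (0 : ℝ) < (1 / 2) ^ n := by positivity
  exact ⟨n, by nlinarith, by nlinarith⟩

lemma exists_dyadic_scale_of_le {x r : ℝ} (hr : 0 < r) (hrx : r ≤ x) :
    ∃ k : ℕ, r * 2 ^ k ≤ x ∧ x < 2 * (r * 2 ^ k) := by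
  obtain ⟨k, hk, hk'⟩ := exists_nat_pow_near ((one_le_div hr).2 hrx) one_lt_two
  rw [le_div_iff₀ hr] at hk
  rw [div_lt_iff₀ hr, pow_succ] at hk'
  exact ⟨k, by linarith, by linarith⟩

section AnnulusBound

variable {E : Type*} [NormedAddCommGroup E] [MeasurableSpace E] [OpensMeasurableSpace E]
  {μ : Measure E} {K : E → ℝ} {s Lam : ℝ}

def AnnulusBound (μ : Measure E) (s Lam : ℝ) (K : E → ℝ) : Prop :=
  ∀ r : ℝ, 0 < r → ∫⁻ y in ball (0 : E) (2 * r) \ ball 0 r, ENNReal.ofReal (K y) ∂μ ≤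
    ENNReal.ofReal (Lam * r ^ (-(2 * s)))

lemma AnnulusBound.setLIntegral_annulus_rpow_mul_le (hK : AnnulusBound μ s Lam K) {p t : ℝ}
    (hp : 0 ≤ p) (ht : 0 < t) :
    ∫⁻ y in ball (0 : E) (2 * t) \ ball 0 t, ENNReal.ofReal (‖y‖ ^ p * K y) ∂μ ≤
      ENNReal.ofReal (2 ^ p * Lam * t ^ (p - 2 * s)) := by
  have hscale : (2 * t) ^ p * (Lam * t ^ (-(2 * s))) = 2 ^ p * Lam * t ^ (p - 2 * s) := by
    rw [Real.mul_rpow zero_le_two ht.le, sub_eq_add_neg, Real.rpow_add ht]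
    ring
  calc ∫⁻ y in ball (0 : E) (2 * t) \ ball 0 t, ENNReal.ofReal (‖y‖ ^ p * K y) ∂μ
      ≤ ∫⁻ y in ball (0 : E) (2 * t) \ ball 0 t,
          ENNReal.ofReal ((2 * t) ^ p) * ENNReal.ofReal (K y) ∂μ := by
        refine setLIntegral_mono' (measurableSet_ball.diff measurableSet_ball) fun y hy => ?_
        rw [ENNReal.ofReal_mul (by positivity)]
        gcongr
        exact (mem_ball_zero_iff.1 hy.1).le
    _ = ENNReal.ofReal ((2 * t) ^ p) *
          ∫⁻ y in ball (0 : E) (2 * t) \ ball 0 t, ENNReal.ofReal (K y) ∂μ :=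
        lintegral_const_mul' _ _ ENNReal.ofReal_ne_top
    _ ≤ ENNReal.ofReal ((2 * t) ^ p) * ENNReal.ofReal (Lam * t ^ (-(2 * s))) := by
        gcongr
        exact hK t ht
    _ = ENNReal.ofReal (2 ^ p * Lam * t ^ (p - 2 * s)) := by
        rw [← ENNReal.ofReal_mul (by positivity), hscale]

lemma AnnulusBound.setLIntegral_ball_rpow_mul_le (hK : AnnulusBound μ s Lam K) (hs : 0 ≤ s)
    (hLam : 0 ≤ Lam) {p r : ℝ} (hp : 2 * s < p) (hr : 0 < r) :
    ∫⁻ y in ball (0 : E) r, ENNReal.ofReal (‖y‖ ^ p * K y) ∂μ ≤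
      ENNReal.ofReal (2 ^ p * Lam / (2 ^ (p - 2 * s) - 1) * r ^ (p - 2 * s)) := by
  have hp0 : 0 < p := by linarith
  have hcover : ball (0 : E) r ⊆
      {0} ∪ ⋃ k : ℕ, ball 0 (2 * (r / 2 * (1 / 2) ^ k)) \ ball 0 (r / 2 * (1 / 2) ^ k) := by
    intro y hy
    rcases eq_or_ne y 0 with rfl | hy0
    · exact Or.inl rfl
    obtain ⟨k, hk⟩ := exists_dyadic_scale_of_lt (norm_pos_iff.2 hy0) (mem_ball_zero_iff.1 hy)
    exact Or.inr (mem_iUnion.2 ⟨k, by simpa [mem_ball_zero_iff] using hk.symm⟩)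
  have hgeom : (1 / 2 : ℝ) ^ (p - 2 * s) < 1 :=
    Real.rpow_lt_one (by norm_num) (by norm_num) (by linarith)
  calc ∫⁻ y in ball (0 : E) r, ENNReal.ofReal (‖y‖ ^ p * K y) ∂μ
      ≤ ∑' k : ℕ, ∫⁻ y in ball 0 (2 * (r / 2 * (1 / 2) ^ k)) \ ball 0 (r / 2 * (1 / 2) ^ k),
          ENNReal.ofReal (‖y‖ ^ p * K y) ∂μ := by
        refine (lintegral_mono_set hcover).trans ((lintegral_union_le _ _ _).trans ?_)
        rw [lintegral_singleton, norm_zero, Real.zero_rpow hp0.ne', zero_mul, ENNReal.ofReal_zero,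
          zero_mul, zero_add]
        exact lintegral_iUnion_le _ _
    _ ≤ ∑' k : ℕ, ENNReal.ofReal (2 ^ p * Lam * (r / 2 * (1 / 2) ^ k) ^ (p - 2 * s)) :=
        ENNReal.tsum_le_tsum fun k => hK.setLIntegral_annulus_rpow_mul_le hp0.le (by positivity)
    _ = ENNReal.ofReal (2 ^ p * Lam * (r / 2) ^ (p - 2 * s) / (1 - (1 / 2) ^ (p - 2 * s))) :=
        tsum_ofReal_mul_rpow_mul_pow (by positivity) (by positivity) (by norm_num) hgeom
    _ = ENNReal.ofReal (2 ^ p * Lam / (2 ^ (p - 2 * s) - 1) * r ^ (p - 2 * s)) := by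
        have := two_rpow_sub_one_pos (e := p - 2 * s) (by linarith)
        rw [Real.div_rpow hr.le zero_le_two, Real.div_rpow zero_le_one zero_le_two, Real.one_rpow]
        congr 1
        field_simp

lemma AnnulusBound.setLIntegral_compl_ball_rpow_mul_le (hK : AnnulusBound μ s Lam K)
    (hLam : 0 ≤ Lam) {q r : ℝ} (hq0 : 0 ≤ q) (hq : q < 2 * s) (hr : 0 < r) :
    ∫⁻ y in (ball (0 : E) r)ᶜ, ENNReal.ofReal (‖y‖ ^ q * K y) ∂μ ≤
      ENNReal.ofReal (2 ^ q * Lam / (1 - 2 ^ (q - 2 * s)) * r ^ (q - 2 * s)) := by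
  have hcover : (ball (0 : E) r)ᶜ ⊆ ⋃ k : ℕ, ball 0 (2 * (r * 2 ^ k)) \ ball 0 (r * 2 ^ k) := by
    intro y hy
    obtain ⟨k, hk⟩ := exists_dyadic_scale_of_le hr (not_lt.1 (mt mem_ball_zero_iff.2 hy))
    exact mem_iUnion.2 ⟨k, by simpa [mem_ball_zero_iff] using hk.symm⟩
  have hgeom : (2 : ℝ) ^ (q - 2 * s) < 1 := sub_pos.1 (one_sub_two_rpow_pos (by linarith))
  calc ∫⁻ y in (ball (0 : E) r)ᶜ, ENNReal.ofReal (‖y‖ ^ q * K y) ∂μ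
      ≤ ∑' k : ℕ, ∫⁻ y in ball 0 (2 * (r * 2 ^ k)) \ ball 0 (r * 2 ^ k),
          ENNReal.ofReal (‖y‖ ^ q * K y) ∂μ :=
        (lintegral_mono_set hcover).trans (lintegral_iUnion_le _ _)
    _ ≤ ∑' k : ℕ, ENNReal.ofReal (2 ^ q * Lam * (r * 2 ^ k) ^ (q - 2 * s)) :=
        ENNReal.tsum_le_tsum fun k => hK.setLIntegral_annulus_rpow_mul_le hq0 (by positivity)
    _ = ENNReal.ofReal (2 ^ q * Lam / (1 - 2 ^ (q - 2 * s)) * r ^ (q - 2 * s)) := by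
        rw [tsum_ofReal_mul_rpow_mul_pow (by positivity) hr.le zero_le_two hgeom]
        ring_nf

lemma AnnulusBound.lintegral_norm_mul_le (hK : AnnulusBound μ s Lam K) (hK0 : ∀ y, 0 ≤ K y)
    (hs : 0 ≤ s) (hLam : 0 ≤ Lam) {f : E → ℝ} {p q A B r : ℝ} (hp : 2 * s < p) (hq0 : 0 ≤ q)
    (hq : q < 2 * s) (hA : 0 ≤ A) (hB : 0 ≤ B) (hr : 0 < r)
    (hin : ∀ y, ‖y‖ < r → |f y| ≤ A * ‖y‖ ^ p) (hout : ∀ y, r ≤ ‖y‖ → |f y| ≤ B * ‖y‖ ^ q) :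
    ∫⁻ y, ENNReal.ofReal ‖f y * K y‖ ∂μ ≤
      ENNReal.ofReal (A * (2 ^ p * Lam / (2 ^ (p - 2 * s) - 1) * r ^ (p - 2 * s)) +
        B * (2 ^ q * Lam / (1 - 2 ^ (q - 2 * s)) * r ^ (q - 2 * s))) := by
  have hpt : ∀ {C e : ℝ} {y : E}, 0 ≤ C → |f y| ≤ C * ‖y‖ ^ e →
      ENNReal.ofReal ‖f y * K y‖ ≤ ENNReal.ofReal C * ENNReal.ofReal (‖y‖ ^ e * K y) := by
    intro C e y hC h
    rw [← ENNReal.ofReal_mul hC, Real.norm_eq_abs, abs_mul, abs_of_nonneg (hK0 y), ← mul_assoc]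
    exact ENNReal.ofReal_le_ofReal (mul_le_mul_of_nonneg_right h (hK0 y))
  have hball : ∫⁻ y in ball (0 : E) r, ENNReal.ofReal ‖f y * K y‖ ∂μ ≤ ENNReal.ofReal A *
      ENNReal.ofReal (2 ^ p * Lam / (2 ^ (p - 2 * s) - 1) * r ^ (p - 2 * s)) := by
    refine (setLIntegral_mono' measurableSet_ball fun y hy =>
      hpt hA (hin y (mem_ball_zero_iff.1 hy))).trans ?_
    rw [lintegral_const_mul' _ _ ENNReal.ofReal_ne_top]
    gcongr
    exact hK.setLIntegral_ball_rpow_mul_le hs hLam hp hr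
  have hcompl : ∫⁻ y in (ball (0 : E) r)ᶜ, ENNReal.ofReal ‖f y * K y‖ ∂μ ≤ ENNReal.ofReal B *
      ENNReal.ofReal (2 ^ q * Lam / (1 - 2 ^ (q - 2 * s)) * r ^ (q - 2 * s)) := by
    refine (setLIntegral_mono' measurableSet_ball.compl fun y hy =>
      hpt hB (hout y (not_lt.1 (mt mem_ball_zero_iff.2 hy)))).trans ?_
    rw [lintegral_const_mul' _ _ ENNReal.ofReal_ne_top]
    gcongr
    exact hK.setLIntegral_compl_ball_rpow_mul_le hLam hq0 hq hr
  have hinner := two_rpow_sub_one_pos (e := p - 2 * s) (by linarith)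
  have houter := one_sub_two_rpow_pos (e := q - 2 * s) (by linarith)
  rw [← lintegral_add_compl _ (measurableSet_ball (x := (0 : E)) (ε := r)),
    ENNReal.ofReal_add (by positivity) (by positivity), ENNReal.ofReal_mul hA,
    ENNReal.ofReal_mul hB]
  exact add_le_add hball hcompl

end AnnulusBound

lemma incr_eq_of_half_lt {d : ℕ} {s : ℝ} (hs : 1 / 2 < s) (u : Ed d → ℝ) (x y : Ed d) :
    incr d s u x y = u (x + y) - u x - fderiv ℝ u x y := by
  rw [incr, if_neg (by linarith), if_neg hs.ne']

/-- The two dyadic series of `AnnulusBound.lintegral_norm_mul_le` for `p = 1 + α`, `q = 1`. -/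
def pucciHolderConst (s Lam α : ℝ) : ℝ :=
  2 * (2 ^ (1 + α) * Lam / (2 ^ (1 + α - 2 * s) - 1) + 2 * Lam / (1 - 2 ^ (1 - 2 * s)))

lemma pucciHolderConst_pos {s Lam α : ℝ} (hs : 1 / 2 < s) (hLam : 0 < Lam) (hα : 2 * s - 1 < α) :
    0 < pucciHolderConst s Lam α := by
  have hinner := two_rpow_sub_one_pos (e := 1 + α - 2 * s) (by linarith)
  have houter := one_sub_two_rpow_pos (e := 1 - 2 * s) (by linarith)
  unfold pucciHolderConst
  positivity

section IncrementBounds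

variable {d : ℕ} {s Lam α H : ℝ} {K φ : Ed d → ℝ}

lemma continuous_incr (hs : 1 / 2 < s) (hφ : Differentiable ℝ φ) (x : Ed d) :
    Continuous (incr d s φ x) := by
  simp_rw [funext (incr_eq_of_half_lt hs φ x)]
  have := hφ.continuous
  fun_prop

lemma lintegral_norm_incr_mul_le (hs : 1 / 2 < s) (hLam : 0 ≤ Lam) (hα : 2 * s - 1 < α)
    (hK : AnnulusBound volume s Lam K) (hK0 : ∀ y, 0 ≤ K y) (hφ : Differentiable ℝ φ)
    (hH : 0 ≤ H) (hHol : ∀ x y, ‖fderiv ℝ φ x - fderiv ℝ φ y‖ ≤ H * ‖x - y‖ ^ α)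
    {Cb Cb' : ℝ} (hCb : ∀ x, |φ x| ≤ Cb) (hCb' : ∀ x, ‖fderiv ℝ φ x‖ ≤ Cb') (x : Ed d) :
    ∫⁻ y, ENNReal.ofReal ‖incr d s φ x y * K y‖ ≤
      ENNReal.ofReal (H * (2 ^ (1 + α) * Lam / (2 ^ (1 + α - 2 * s) - 1)) +
        (2 * Cb + Cb') * (2 * Lam / (1 - 2 ^ (1 - 2 * s)))) := by
  have hin : ∀ y : Ed d, ‖y‖ < 1 → |incr d s φ x y| ≤ H * ‖y‖ ^ (1 + α) := fun y _ => by
    simpa [incr_eq_of_half_lt hs] using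
      norm_taylorRemainder_le_of_holder hφ hH (by linarith) hHol x y
  have hout : ∀ y : Ed d, 1 ≤ ‖y‖ → |incr d s φ x y| ≤ (2 * Cb + Cb') * ‖y‖ ^ (1 : ℝ) := by
    intro y hy
    have hCb0 : 0 ≤ Cb := (abs_nonneg _).trans (hCb 0)
    have hlin : |fderiv ℝ φ x y| ≤ Cb' * ‖y‖ :=
      ((fderiv ℝ φ x).le_opNorm y).trans (mul_le_mul_of_nonneg_right (hCb' x) (norm_nonneg y))
    rw [incr_eq_of_half_lt hs, Real.rpow_one]
    calc |φ (x + y) - φ x - fderiv ℝ φ x y| ≤ |φ (x + y)| + |φ x| + |fderiv ℝ φ x y| :=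
          (abs_sub _ _).trans (add_le_add_left (abs_sub _ _) _)
      _ ≤ (2 * Cb + Cb') * ‖y‖ := by nlinarith [hCb (x + y), hCb x]
  simpa only [Real.rpow_one, Real.one_rpow, mul_one] using
    hK.lintegral_norm_mul_le hK0 (by linarith) hLam (by linarith) zero_le_one (by linarith) hH
      (by linarith [(abs_nonneg _).trans (hCb 0), (norm_nonneg _).trans (hCb' 0)]) one_pos hin hout

lemma integrable_incr_mul (hs : 1 / 2 < s) (hLam : 0 ≤ Lam) (hα : 2 * s - 1 < α)
    (hK : AnnulusBound volume s Lam K) (hK0 : ∀ y, 0 ≤ K y) (hKm : Measurable K)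
    (hφ : Differentiable ℝ φ) (hH : 0 ≤ H)
    (hHol : ∀ x y, ‖fderiv ℝ φ x - fderiv ℝ φ y‖ ≤ H * ‖x - y‖ ^ α) {Cb Cb' : ℝ}
    (hCb : ∀ x, |φ x| ≤ Cb) (hCb' : ∀ x, ‖fderiv ℝ φ x‖ ≤ Cb') (x : Ed d) :
    Integrable (fun y => incr d s φ x y * K y) :=
  ⟨((continuous_incr hs hφ x).measurable.mul hKm).aestronglyMeasurable,
    (hasFiniteIntegral_iff_norm _).2 ((lintegral_norm_incr_mul_le hs hLam hα hK hK0 hφ hH hHol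
      hCb hCb' x).trans_lt ENNReal.ofReal_lt_top)⟩

lemma abs_opL_le (hs : 1 / 2 < s) (hLam : 0 ≤ Lam) (hα : 2 * s - 1 < α)
    (hK : AnnulusBound volume s Lam K) (hK0 : ∀ y, 0 ≤ K y) (hφ : Differentiable ℝ φ)
    (hH : 0 ≤ H) (hHol : ∀ x y, ‖fderiv ℝ φ x - fderiv ℝ φ y‖ ≤ H * ‖x - y‖ ^ α)
    {Cb Cb' : ℝ} (hCb : ∀ x, |φ x| ≤ Cb) (hCb' : ∀ x, ‖fderiv ℝ φ x‖ ≤ Cb') (x : Ed d) :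
    |opL d s K φ x| ≤ H * (2 ^ (1 + α) * Lam / (2 ^ (1 + α - 2 * s) - 1)) +
      (2 * Cb + Cb') * (2 * Lam / (1 - 2 ^ (1 - 2 * s))) := by
  have hinner := two_rpow_sub_one_pos (e := 1 + α - 2 * s) (by linarith)
  have houter := one_sub_two_rpow_pos (e := 1 - 2 * s) (by linarith)
  have hCb0 : 0 ≤ Cb := (abs_nonneg _).trans (hCb 0)
  have hCb'0 : 0 ≤ Cb' := (norm_nonneg _).trans (hCb' 0)
  rw [← Real.norm_eq_abs]
  exact (norm_integral_le_lintegral_norm _).trans (ENNReal.toReal_le_of_le_ofReal (by positivity)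
    (lintegral_norm_incr_mul_le hs hLam hα hK hK0 hφ hH hHol hCb hCb' x))

lemma lintegral_norm_incr_sub_incr_mul_le (hs : 1 / 2 < s) (hLam : 0 ≤ Lam) (hα : 2 * s - 1 < α)
    (hK : AnnulusBound volume s Lam K) (hK0 : ∀ y, 0 ≤ K y) (hφ : Differentiable ℝ φ)
    (hH : 0 ≤ H) (hHol : ∀ x y, ‖fderiv ℝ φ x - fderiv ℝ φ y‖ ≤ H * ‖x - y‖ ^ α) {x z : Ed d}
    (hxz : x ≠ z) :
    ∫⁻ y, ENNReal.ofReal ‖(incr d s φ x y - incr d s φ z y) * K y‖ ≤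
      ENNReal.ofReal (pucciHolderConst s Lam α * H * ‖x - z‖ ^ (1 + α - 2 * s)) := by
  have hr : 0 < ‖x - z‖ := norm_pos_iff.2 (sub_ne_zero.2 hxz)
  have hin : ∀ y : Ed d, ‖y‖ < ‖x - z‖ →
      |incr d s φ x y - incr d s φ z y| ≤ 2 * H * ‖y‖ ^ (1 + α) := fun y _ => by
    have hx := norm_taylorRemainder_le_of_holder hφ hH (by linarith) hHol x y
    have hz := norm_taylorRemainder_le_of_holder hφ hH (by linarith) hHol z y
    rw [incr_eq_of_half_lt hs, incr_eq_of_half_lt hs]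
    rw [Real.norm_eq_abs] at hx hz
    linarith [abs_sub (φ (x + y) - φ x - fderiv ℝ φ x y) (φ (z + y) - φ z - fderiv ℝ φ z y)]
  have hout : ∀ y : Ed d, ‖x - z‖ ≤ ‖y‖ →
      |incr d s φ x y - incr d s φ z y| ≤ 2 * H * ‖x - z‖ ^ α * ‖y‖ ^ (1 : ℝ) := fun y _ => by
    rw [incr_eq_of_half_lt hs, incr_eq_of_half_lt hs, Real.rpow_one, ← Real.norm_eq_abs]
    exact norm_taylorRemainder_sub_le_of_holder hφ hHol x z y
  refine (hK.lintegral_norm_mul_le hK0 (by linarith) hLam (by linarith) zero_le_one (by linarith)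
    (by positivity) (by positivity) hr hin hout).trans_eq ?_
  have hpow : ‖x - z‖ ^ α * ‖x - z‖ ^ (1 - 2 * s) = ‖x - z‖ ^ (1 + α - 2 * s) := by
    rw [← Real.rpow_add hr]
    ring_nf
  rw [Real.rpow_one, pucciHolderConst, ← hpow]
  ring_nf

lemma abs_opL_sub_opL_le (hs : 1 / 2 < s) (hLam : 0 < Lam) (hα : 2 * s - 1 < α)
    (hK : AnnulusBound volume s Lam K) (hK0 : ∀ y, 0 ≤ K y) (hφ : Differentiable ℝ φ)
    (hH : 0 ≤ H) (hHol : ∀ x y, ‖fderiv ℝ φ x - fderiv ℝ φ y‖ ≤ H * ‖x - y‖ ^ α)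
    (hint : ∀ x, Integrable (fun y => incr d s φ x y * K y)) (x z : Ed d) :
    |opL d s K φ x - opL d s K φ z| ≤ pucciHolderConst s Lam α * H * ‖x - z‖ ^ (1 + α - 2 * s) := by
  rcases eq_or_ne x z with rfl | hxz
  · rw [sub_self, sub_self, norm_zero, Real.zero_rpow (by linarith)]
    simp
  have hM : 0 ≤ pucciHolderConst s Lam α * H * ‖x - z‖ ^ (1 + α - 2 * s) := by
    have := pucciHolderConst_pos hs hLam hα
    positivity
  rw [opL, opL, ← integral_sub (hint x) (hint z), ← Real.norm_eq_abs]
  simp_rw [← sub_mul]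
  exact (norm_integral_le_lintegral_norm _).trans (ENNReal.toReal_le_of_le_ofReal hM
    (lintegral_norm_incr_sub_incr_mul_le hs hLam.le hα hK hK0 hφ hH hHol hxz))

end IncrementBounds

theorem statement7_general (d : ℕ) (s Lam α : ℝ)
    (hs2 : 1 / 2 < s) (hLam : 0 < Lam) (hα : α ∈ Ioc (2 * s - 1) 1) :
    ∃ C : ℝ, 0 < C ∧ ∀ lam ρ : ℝ, 0 < lam → lam ≤ Lam → 0 ≤ ρ →
      ∀ φ : Ed d → ℝ, ContDiff ℝ 1 φ → (∃ Cb : ℝ, ∀ x, |φ x| ≤ Cb) →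
        (∃ Cb' : ℝ, ∀ x, ‖fderiv ℝ φ x‖ ≤ Cb') →
      ∀ H : ℝ, 0 ≤ H → (∀ x y : Ed d, ‖fderiv ℝ φ x - fderiv ℝ φ y‖ ≤ H * ‖x - y‖ ^ α) →
        (∀ x : Ed d,
          BddBelow ((fun K => opL d s K φ x) '' KernelClass d s lam Lam ρ) ∧
          BddAbove ((fun K => opL d s K φ x) '' KernelClass d s lam Lam ρ)) ∧
        ∀ x y : Ed d,
          |pucciInf d s lam Lam ρ φ x - pucciInf d s lam Lam ρ φ y| ≤
            C * H * ‖x - y‖ ^ (1 + α - 2 * s) ∧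
          |pucciSup d s lam Lam ρ φ x - pucciSup d s lam Lam ρ φ y| ≤
            C * H * ‖x - y‖ ^ (1 + α - 2 * s) := by
  refine ⟨pucciHolderConst s Lam α, pucciHolderConst_pos hs2 hLam hα.1, ?_⟩
  rintro lam ρ - - - φ hφ ⟨Cb, hCb⟩ ⟨Cb', hCb'⟩ H hH hHol
  have hφ' : Differentiable ℝ φ := hφ.differentiable one_ne_zero
  have hBdd : ∀ x, Bornology.IsBounded ((fun K => opL d s K φ x) '' KernelClass d s lam Lam ρ) :=
    fun x => isBounded_iff_forall_norm_le.2 ⟨_, by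
      rintro _ ⟨K, ⟨-, hK0, -, hK, -⟩, rfl⟩
      exact abs_opL_le hs2 hLam.le hα.1 hK hK0 hφ' hH hHol hCb hCb' x⟩
  refine ⟨fun x => ⟨(hBdd x).bddBelow, (hBdd x).bddAbove⟩, fun x z => ?_⟩
  have hdiff : ∀ K ∈ KernelClass d s lam Lam ρ, |opL d s K φ x - opL d s K φ z| ≤
      pucciHolderConst s Lam α * H * ‖x - z‖ ^ (1 + α - 2 * s) := by
    rintro K ⟨hKm, hK0, -, hK, -⟩
    exact abs_opL_sub_opL_le hs2 hLam hα.1 hK hK0 hφ' hH hHol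
      (integrable_incr_mul hs2 hLam.le hα.1 hK hK0 hKm hφ' hH hHol hCb hCb') x z
  have hM : 0 ≤ pucciHolderConst s Lam α * H * ‖x - z‖ ^ (1 + α - 2 * s) := by
    have := pucciHolderConst_pos hs2 hLam hα.1
    positivity
  exact ⟨abs_csInf_image_sub_le hM (hBdd x).bddBelow (hBdd z).bddBelow hdiff,
    abs_csSup_image_sub_le hM (hBdd x).bddAbove (hBdd z).bddAbove hdiff⟩

/-- for `s > 1/2` and `α ∈ (2s-1,1]`, the Pucci operators map `C^{1,α}(ℝ^d)` to
`C^{0,1+α-2s}(ℝ^d)` with a universal seminorm bound. -/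
theorem statement7 (d : ℕ) (hd : 1 ≤ d) (s Lam α : ℝ) (hs : s ∈ Ioo (0:ℝ) 1)
    (hs2 : 1 / 2 < s) (hLam : 0 < Lam) (hα : α ∈ Ioc (2 * s - 1) 1) :
    ∃ C : ℝ, 0 < C ∧ ∀ lam ρ : ℝ, 0 < lam → lam ≤ Lam → 0 ≤ ρ →
      ∀ φ : Ed d → ℝ, ContDiff ℝ 1 φ → (∃ Cb : ℝ, ∀ x, |φ x| ≤ Cb) →
        (∃ Cb' : ℝ, ∀ x, ‖fderiv ℝ φ x‖ ≤ Cb') →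
      ∀ H : ℝ, 0 ≤ H → (∀ x y : Ed d, ‖fderiv ℝ φ x - fderiv ℝ φ y‖ ≤ H * ‖x - y‖ ^ α) →
        (∀ x : Ed d,
          BddBelow ((fun K => opL d s K φ x) '' KernelClass d s lam Lam ρ) ∧
          BddAbove ((fun K => opL d s K φ x) '' KernelClass d s lam Lam ρ)) ∧
        ∀ x y : Ed d,
          |pucciInf d s lam Lam ρ φ x - pucciInf d s lam Lam ρ φ y| ≤
            C * H * ‖x - y‖ ^ (1 + α - 2 * s) ∧
          |pucciSup d s lam Lam ρ φ x - pucciSup d s lam Lam ρ φ y| ≤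
            C * H * ‖x - y‖ ^ (1 + α - 2 * s) :=
  statement7_general d s Lam α hs2 hLam hα
end
end

section
/- Assume s = 1/2 and let α ∈ (0, 1). Then there exists a constant C > 0 depending only on d, Λ and α such that for every φ ∈ C^1(ℝ^d) with φ and ∇φ bounded and with finite seminorm [φ]_{C^{1,α}(ℝ^d)} = [∇φ]_{C^{0,α}(ℝ^d)}, the values M_ρ^± φ(x) are finite for every x ∈ ℝ^d and for all x, y ∈ ℝ^d one has |M_ρ^± φ(x) − M_ρ^± φ(y)| ≤ C [φ]_{C^{1,α}(ℝ^d)} |x−y|^{α} (both for M_ρ^+ and for M_ρ^−). -/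
open MeasureTheory Metric Set
open scoped Classical

noncomputable section

/-!
Split `ℝᵈ ∖ {0}` into the dyadic annuli `B_{2r} ∖ B_r`, `r = 2ᵏ`, `k ∈ ℤ`. On each of them
`∫ K ≤ Λ / r`, and for `s = 1/2` linear functions integrate to zero against `K`. The difference
`δ_y φ(x) - δ_y φ(x')` agrees, up to such a linear function, both with
`E(y) = (φ(x+y) - φ(x)) - (φ(x'+y) - φ(x'))` and with `E(y) - (Dφ(x) - Dφ(x'))y`, so up to a
constant the annulus contributes at most `Λ/r · H r^α · min(r, |x - x'|)` (Taylor expansion,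
resp. the mean value theorem in `x`). Summing over `k` gives `C Λ H |x - x'|^α` by scaling,
uniformly in `K`, and the bound passes to the infimum and supremum over `K`.
-/

def annulus (d : ℕ) (r : ℝ) : Set (Ed d) := ball 0 (2 * r) \ ball 0 r

/-- `Λ H · annulusWeight α h r` bounds the contribution of the annulus `B_{2r} ∖ B_r` to
`L_K φ(x) - L_K φ(x')` when `h = |x - x'|`. -/
def annulusWeight (α h r : ℝ) : ℝ := (2 * r) ^ α * min (4 * r) h / r

section annulusWeight

variable {α h : ℝ}

lemma annulusWeight_nonneg (hh : 0 ≤ h) {r : ℝ} (hr : 0 < r) : 0 ≤ annulusWeight α h r := by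
  unfold annulusWeight
  have : 0 ≤ min (4 * r) h := le_min (by positivity) hh
  positivity

lemma annulusWeight_mono {h' r : ℝ} (hr : 0 < r) (hh : h ≤ h') :
    annulusWeight α h r ≤ annulusWeight α h' r := by
  unfold annulusWeight
  gcongr

lemma annulusWeight_mul {ρ t : ℝ} (hρ : 0 < ρ) (ht : 0 < t) :
    annulusWeight α ρ (ρ * t) = ρ ^ α * annulusWeight α 1 t := by
  have hmin : min (4 * (ρ * t)) ρ = ρ * min (4 * t) 1 := by
    rw [mul_min_of_nonneg _ _ hρ.le]; congr 1 <;> ring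
  unfold annulusWeight
  rw [show 2 * (ρ * t) = ρ * (2 * t) by ring, Real.mul_rpow hρ.le (by positivity), hmin]
  field_simp

lemma annulusWeight_two_pow_natCast_le (n : ℕ) :
    annulusWeight α h (2 ^ (n : ℤ)) ≤ 2 ^ α * h * (2 ^ α / 2) ^ n := by
  unfold annulusWeight
  rw [zpow_natCast, Real.mul_rpow (by norm_num) (by positivity), ← Real.rpow_pow_comm (by norm_num),
    div_pow]
  have : min (4 * 2 ^ n) h ≤ h := min_le_right _ _
  calc 2 ^ α * (2 ^ α) ^ n * min (4 * 2 ^ n) h / 2 ^ n ≤ 2 ^ α * (2 ^ α) ^ n * h / 2 ^ n := by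
        gcongr
    _ = _ := by ring

lemma annulusWeight_two_pow_neg_natCast_le (n : ℕ) :
    annulusWeight α h (2 ^ (-(n : ℤ))) ≤ 4 * 2 ^ α * ((2 ^ α)⁻¹) ^ n := by
  unfold annulusWeight
  rw [zpow_neg, zpow_natCast, Real.mul_rpow (by norm_num) (by positivity),
    Real.inv_rpow (by positivity), ← Real.rpow_pow_comm (by norm_num), inv_pow]
  have : min (4 * (2 ^ n)⁻¹) h ≤ 4 * (2 ^ n)⁻¹ := min_le_left _ _
  calc 2 ^ α * ((2 ^ α) ^ n)⁻¹ * min (4 * (2 ^ n)⁻¹) h / (2 ^ n)⁻¹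
      ≤ 2 ^ α * ((2 ^ α) ^ n)⁻¹ * (4 * (2 ^ n)⁻¹) / (2 ^ n)⁻¹ := by gcongr
    _ = _ := by field_simp

lemma summable_annulusWeight (hα : α ∈ Ioo (0 : ℝ) 1) (hh : 0 ≤ h) :
    Summable fun k : ℤ => annulusWeight α h (2 ^ k) := by
  have h2α : 1 < (2 : ℝ) ^ α := Real.one_lt_rpow (by norm_num) hα.1
  have h2α' : (2 : ℝ) ^ α < 2 := by
    simpa using Real.rpow_lt_rpow_of_exponent_lt (x := 2) (by norm_num) hα.2
  refine Summable.of_nat_of_neg ?_ ?_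
  · refine Summable.of_nonneg_of_le (fun n => annulusWeight_nonneg hh (by positivity))
      annulusWeight_two_pow_natCast_le ((summable_geometric_of_lt_one ?_ ?_).mul_left _)
    · positivity
    · rwa [div_lt_one (by norm_num)]
  · refine Summable.of_nonneg_of_le (fun n => annulusWeight_nonneg hh (by positivity))
      annulusWeight_two_pow_neg_natCast_le ((summable_geometric_of_lt_one ?_ ?_).mul_left _)
    · positivity
    · exact inv_lt_one_of_one_lt₀ h2α

lemma tsum_annulusWeight_pos (hα : α ∈ Ioo (0 : ℝ) 1) :
    0 < ∑' k : ℤ, annulusWeight α 1 (2 ^ k) := by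
  refine (summable_annulusWeight hα zero_le_one).tsum_pos
    (fun k => annulusWeight_nonneg zero_le_one (by positivity)) 0 ?_
  norm_num [annulusWeight]
  positivity

/-- Shifting the index by `m` with `h < 2 ^ m ≤ 2 h` rescales every weight by `(2 ^ m) ^ α`. -/
lemma tsum_annulusWeight_le (hα : α ∈ Ioo (0 : ℝ) 1) (hh : 0 ≤ h) :
    ∑' k : ℤ, annulusWeight α h (2 ^ k) ≤
      2 ^ α * (∑' k : ℤ, annulusWeight α 1 (2 ^ k)) * h ^ α := by
  rcases hh.eq_or_lt with rfl | hpos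
  · have : ∀ k : ℤ, annulusWeight α 0 (2 ^ k) = 0 := fun k => by
      simp [annulusWeight, min_eq_right (by positivity : (0 : ℝ) ≤ 4 * 2 ^ k)]
    simp [this, Real.zero_rpow hα.1.ne']
  set m := Int.log 2 h + 1
  have hm_lt : h < 2 ^ m := Int.lt_zpow_succ_log_self (by norm_num) h
  have hm_le : (2 : ℝ) ^ m ≤ 2 * h := by
    rw [zpow_add_one₀ two_ne_zero, mul_comm]
    gcongr
    exact Int.zpow_log_le_self (by norm_num) hpos
  have hshift : ∀ k : ℤ, annulusWeight α (2 ^ m) (2 ^ k) =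
      (2 ^ m) ^ α * annulusWeight α 1 (2 ^ (k - m)) := fun k => by
    rw [← annulusWeight_mul (by positivity) (by positivity), ← zpow_add₀ two_ne_zero,
      add_sub_cancel]
  calc ∑' k : ℤ, annulusWeight α h (2 ^ k)
      ≤ ∑' k : ℤ, annulusWeight α (2 ^ m) (2 ^ k) :=
        Summable.tsum_le_tsum (fun k => annulusWeight_mono (by positivity) hm_lt.le)
          (summable_annulusWeight hα hh) (summable_annulusWeight hα (by positivity))
    _ = (2 ^ m) ^ α * ∑' k : ℤ, annulusWeight α 1 (2 ^ k) := by
        rw [tsum_congr hshift, tsum_mul_left]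
        exact congrArg _ ((Equiv.subRight m).tsum_eq fun j => annulusWeight α 1 (2 ^ j))
    _ ≤ (2 * h) ^ α * ∑' k : ℤ, annulusWeight α 1 (2 ^ k) := by
        gcongr
        · exact tsum_nonneg fun k => annulusWeight_nonneg zero_le_one (by positivity)
        · exact hα.1.le
    _ = _ := by rw [Real.mul_rpow (by norm_num) hh]; ring

end annulusWeight

section annulus

variable {d : ℕ}

lemma mem_annulus {r : ℝ} {y : Ed d} : y ∈ annulus d r ↔ r ≤ ‖y‖ ∧ ‖y‖ < 2 * r := by
  simp only [annulus, mem_sdiff, mem_ball_zero_iff, not_lt]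
  tauto

lemma measurableSet_annulus {r : ℝ} : MeasurableSet (annulus d r) :=
  measurableSet_ball.diff measurableSet_ball

lemma iUnion_annulus_two_zpow : ⋃ k : ℤ, annulus d (2 ^ k) = {0}ᶜ := by
  ext y
  simp only [mem_iUnion, mem_annulus, mem_compl_iff, mem_singleton_iff]
  constructor
  · rintro ⟨k, hk, -⟩ rfl
    exact (zpow_pos two_pos k).not_ge (by simpa using hk)
  · intro hy
    have hy' : 0 < ‖y‖ := norm_pos_iff.2 hy
    refine ⟨Int.log 2 ‖y‖, by exact_mod_cast Int.zpow_log_le_self (by norm_num) hy', ?_⟩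
    rw [← zpow_one_add₀ two_ne_zero, add_comm]
    exact_mod_cast Int.lt_zpow_succ_log_self (by norm_num) ‖y‖

lemma pairwise_disjoint_annulus_two_zpow :
    Pairwise (Function.onFun Disjoint fun k : ℤ => annulus d (2 ^ k)) := by
  refine (pairwise_disjoint_on _).2 fun k j hkj => Set.disjoint_left.2 fun y hk hj => ?_
  have : (2 : ℝ) * 2 ^ k ≤ 2 ^ j := by
    rw [← zpow_one_add₀ two_ne_zero]
    exact zpow_le_zpow_right₀ one_le_two (by omega)
  linarith [(mem_annulus.1 hk).2, (mem_annulus.1 hj).1]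

lemma abs_integral_le_tsum_annulus {g : Ed d → ℝ} (hg0 : g 0 = 0) (hg : Integrable g)
    {t : ℤ → ℝ} (ht : ∀ k, |∫ y in annulus d (2 ^ k), g y| ≤ t k) (hts : Summable t) :
    |∫ y, g y| ≤ ∑' k, t k := by
  have hsupp : ∀ y ∉ ⋃ k : ℤ, annulus d (2 ^ k), g y = 0 := by
    intro y hy
    rw [iUnion_annulus_two_zpow, notMem_compl_iff, mem_singleton_iff] at hy
    rw [hy, hg0]
  have habs : Summable fun k : ℤ => ‖∫ y in annulus d (2 ^ k), g y‖ :=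
    Summable.of_nonneg_of_le (fun k => norm_nonneg _) ht hts
  rw [← setIntegral_eq_integral_of_forall_compl_eq_zero hsupp,
    integral_iUnion (fun _ => measurableSet_annulus) pairwise_disjoint_annulus_two_zpow
      hg.integrableOn, ← Real.norm_eq_abs]
  exact (norm_tsum_le_tsum_norm habs).trans (habs.tsum_le_tsum ht hts)

end annulus

section kernel

variable {d : ℕ} {lam Lam ρ : ℝ} {K : Ed d → ℝ}

lemma lintegral_annulus_le (hK : K ∈ KernelClass d (1/2) lam Lam ρ) {r : ℝ} (hr : 0 < r) :
    ∫⁻ y in annulus d r, ENNReal.ofReal (K y) ≤ ENNReal.ofReal (Lam / r) := by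
  have h := hK.2.2.2.1 r hr
  rwa [show -(2 * ((1 : ℝ) / 2)) = -1 by norm_num, Real.rpow_neg_one, ← div_eq_mul_inv] at h

lemma lintegral_norm_mul_annulus_le (hK : K ∈ KernelClass d (1/2) lam Lam ρ) {r : ℝ}
    (hr : 0 < r) {f : Ed d → ℝ} {c : ℝ} (hc : 0 ≤ c) (hfc : ∀ y ∈ annulus d r, |f y| ≤ c) :
    ∫⁻ y in annulus d r, ENNReal.ofReal ‖f y * K y‖ ≤ ENNReal.ofReal (c * (Lam / r)) := by
  have hKm : Measurable fun y => ENNReal.ofReal (K y) := ENNReal.measurable_ofReal.comp hK.1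
  calc ∫⁻ y in annulus d r, ENNReal.ofReal ‖f y * K y‖
      ≤ ∫⁻ y in annulus d r, ENNReal.ofReal c * ENNReal.ofReal (K y) := by
        refine setLIntegral_mono (hKm.const_mul _) fun y hy => ?_
        rw [← ENNReal.ofReal_mul hc, Real.norm_eq_abs, abs_mul, abs_of_nonneg (hK.2.1 y)]
        exact ENNReal.ofReal_le_ofReal (mul_le_mul_of_nonneg_right (hfc y hy) (hK.2.1 y))
    _ = ENNReal.ofReal c * ∫⁻ y in annulus d r, ENNReal.ofReal (K y) :=
        lintegral_const_mul _ hKm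
    _ ≤ ENNReal.ofReal c * ENNReal.ofReal (Lam / r) := by
        gcongr
        exact lintegral_annulus_le hK hr
    _ = ENNReal.ofReal (c * (Lam / r)) := (ENNReal.ofReal_mul hc).symm

lemma integrableOn_mul_annulus (hK : K ∈ KernelClass d (1/2) lam Lam ρ) {r : ℝ} (hr : 0 < r)
    {f : Ed d → ℝ} (hf : Measurable f) {c : ℝ} (hc : 0 ≤ c) (hfc : ∀ y ∈ annulus d r, |f y| ≤ c) :
    IntegrableOn (fun y => f y * K y) (annulus d r) :=
  ⟨(hf.mul hK.1).aestronglyMeasurable, hasFiniteIntegral_iff_norm _ |>.2 <|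
    (lintegral_norm_mul_annulus_le hK hr hc hfc).trans_lt ENNReal.ofReal_lt_top⟩

lemma abs_setIntegral_mul_annulus_le (hLam : 0 ≤ Lam) (hK : K ∈ KernelClass d (1/2) lam Lam ρ)
    {r : ℝ} (hr : 0 < r) {f : Ed d → ℝ} {c : ℝ} (hc : 0 ≤ c)
    (hfc : ∀ y ∈ annulus d r, |f y| ≤ c) :
    |∫ y in annulus d r, f y * K y| ≤ c * (Lam / r) := by
  rw [← Real.norm_eq_abs]
  exact (norm_integral_le_lintegral_norm _).trans
    (ENNReal.toReal_le_of_le_ofReal (by positivity) (lintegral_norm_mul_annulus_le hK hr hc hfc))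

lemma setIntegral_clm_mul_annulus_eq_zero (hK : K ∈ KernelClass d (1/2) lam Lam ρ) {r : ℝ}
    (hr : 0 < r) (b : Ed d →L[ℝ] ℝ) : ∫ y in annulus d r, b y * K y = 0 := by
  have hnorm : IntegrableOn (fun y => ‖y‖ * K y) (annulus d r) :=
    integrableOn_mul_annulus hK hr measurable_norm (c := 2 * r) (by positivity) fun y hy => by
      rw [abs_norm]; exact (mem_annulus.1 hy).2.le
  have hsmul : IntegrableOn (fun y => K y • y) (annulus d r) :=
    hnorm.mono' (hK.1.smul measurable_id).aestronglyMeasurable <| ae_of_all _ fun y => by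
      rw [norm_smul, Real.norm_eq_abs, abs_of_nonneg (hK.2.1 y), mul_comm]
  calc ∫ y in annulus d r, b y * K y = ∫ y in annulus d r, b (K y • y) := by
        simp only [map_smul, smul_eq_mul, mul_comm]
    _ = b (∫ y in annulus d r, K y • y) := b.integral_comp_comm hsmul
    _ = 0 := by rw [show (∫ y in annulus d r, K y • y) = 0 from hK.2.2.2.2 rfl r hr, map_zero]

/-- A dyadic annulus lies either inside or outside `B_1`. -/
lemma setIntegral_ite_clm_mul_annulus_two_zpow_eq_zero (hK : K ∈ KernelClass d (1/2) lam Lam ρ)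
    (k : ℤ) (b : Ed d →L[ℝ] ℝ) :
    ∫ y in annulus d (2 ^ k), (if ‖y‖ < 1 then b y else 0) * K y = 0 := by
  rcases lt_or_ge k 0 with hk | hk
  · rw [← setIntegral_clm_mul_annulus_eq_zero hK (zpow_pos two_pos k) b]
    refine setIntegral_congr_fun measurableSet_annulus fun y hy => ?_
    have h2k : (2 : ℝ) * 2 ^ k ≤ 1 := by
      rw [← zpow_one_add₀ two_ne_zero, ← zpow_zero (2 : ℝ)]
      exact zpow_le_zpow_right₀ one_le_two (by omega)
    simp [(mem_annulus.1 hy).2.trans_le h2k]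
  · refine setIntegral_eq_zero_of_forall_eq_zero fun y hy => ?_
    simp [not_lt.2 ((one_le_zpow₀ one_le_two hk).trans (mem_annulus.1 hy).1)]

lemma integrable_mul_of_forall_annulus_le (hLam : 0 ≤ Lam)
    (hK : K ∈ KernelClass d (1/2) lam Lam ρ) {f : Ed d → ℝ} (hf : Measurable f) (hf0 : f 0 = 0)
    {c : ℤ → ℝ} (hc : ∀ k, 0 ≤ c k) (hfc : ∀ k, ∀ y ∈ annulus d (2 ^ k), |f y| ≤ c k)
    (hsum : Summable fun k => c k * (Lam / 2 ^ k)) :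
    Integrable fun y => f y * K y := by
  refine (integrableOn_iff_integrable_of_support_subset (s := ⋃ k : ℤ, annulus d (2 ^ k))
    ?_).1 ⟨(hf.mul hK.1).aestronglyMeasurable, (hasFiniteIntegral_iff_norm _).2 ?_⟩
  · intro y hy
    rw [iUnion_annulus_two_zpow]
    rintro rfl
    simp [hf0] at hy
  calc ∫⁻ y in ⋃ k : ℤ, annulus d (2 ^ k), ENNReal.ofReal ‖f y * K y‖
      ≤ ∑' k : ℤ, ∫⁻ y in annulus d (2 ^ k), ENNReal.ofReal ‖f y * K y‖ :=
        lintegral_iUnion_le _ _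
    _ ≤ ∑' k : ℤ, ENNReal.ofReal (c k * (Lam / 2 ^ k)) :=
        ENNReal.tsum_le_tsum fun k =>
          lintegral_norm_mul_annulus_le hK (by positivity) (hc k) (hfc k)
    _ = ENNReal.ofReal (∑' k : ℤ, c k * (Lam / 2 ^ k)) :=
        (ENNReal.ofReal_tsum_of_nonneg (fun k => by have := hc k; positivity) hsum).symm
    _ < ⊤ := ENNReal.ofReal_lt_top

end kernel

section holderGradient

variable {d : ℕ} {φ : Ed d → ℝ} {H α : ℝ}

lemma abs_sub_sub_fderiv_le (hφ : Differentiable ℝ φ) (hH0 : 0 ≤ H) (hα : 0 ≤ α)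
    (hH : ∀ x y : Ed d, ‖fderiv ℝ φ x - fderiv ℝ φ y‖ ≤ H * ‖x - y‖ ^ α) (x y : Ed d) :
    |φ (x + y) - φ x - fderiv ℝ φ x y| ≤ H * ‖y‖ ^ α * ‖y‖ := by
  have hbound : ∀ u ∈ closedBall x ‖y‖, ‖fderiv ℝ φ u - fderiv ℝ φ x‖ ≤ H * ‖y‖ ^ α :=
    fun u hu => (hH u x).trans (by gcongr; exact mem_closedBall_iff_norm.1 hu)
  have := (convex_closedBall x ‖y‖).norm_image_sub_le_of_norm_fderiv_le' (fun u _ => hφ u)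
    hbound (mem_closedBall_self (norm_nonneg y))
    (show x + y ∈ closedBall x ‖y‖ by rw [mem_closedBall_iff_norm, add_sub_cancel_left])
  simpa only [add_sub_cancel_left, Real.norm_eq_abs] using this

lemma abs_sub_sub_sub_le (hφ : Differentiable ℝ φ)
    (hH : ∀ x y : Ed d, ‖fderiv ℝ φ x - fderiv ℝ φ y‖ ≤ H * ‖x - y‖ ^ α) (x x' y : Ed d) :
    |(φ (x' + y) - φ x') - (φ (x + y) - φ x)| ≤ H * ‖y‖ ^ α * ‖x' - x‖ := by
  have hderiv : ∀ u ∈ (univ : Set (Ed d)), HasFDerivWithinAt (fun u => φ (u + y) - φ u)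
      (fderiv ℝ φ (u + y) - fderiv ℝ φ u) univ u := fun u _ =>
    (((hφ (u + y)).hasFDerivAt.comp u ((hasFDerivAt_id u).add_const y)).sub
      (hφ u).hasFDerivAt).hasFDerivWithinAt
  have hbound : ∀ u ∈ (univ : Set (Ed d)), ‖fderiv ℝ φ (u + y) - fderiv ℝ φ u‖ ≤ H * ‖y‖ ^ α :=
    fun u _ => by simpa using hH (u + y) u
  exact convex_univ.norm_image_sub_le_of_norm_hasFDerivWithin_le hderiv hbound trivial trivial

end holderGradient

section increment

variable {d : ℕ} {φ : Ed d → ℝ} {H α Cb : ℝ}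

lemma incr_half (x y : Ed d) :
    incr d (1/2) φ x y = φ (x + y) - φ x - (if ‖y‖ < 1 then fderiv ℝ φ x y else 0) := by
  rw [incr, if_neg (lt_irrefl _), if_pos rfl]

lemma incr_half_zero (x : Ed d) : incr d (1/2) φ x 0 = 0 := by
  rw [incr_half]; simp

lemma measurable_incr_half (hφ : Continuous φ) (x : Ed d) : Measurable (incr d (1/2) φ x) := by
  simp_rw [funext (incr_half (φ := φ) x)]
  exact ((hφ.comp (continuous_const.add continuous_id)).measurable.sub measurable_const).sub
    (Measurable.ite (measurableSet_lt measurable_norm measurable_const)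
      (fderiv ℝ φ x).continuous.measurable measurable_const)

lemma abs_incr_half_le (hφ : Differentiable ℝ φ) (hH0 : 0 ≤ H) (hα : 0 ≤ α)
    (hH : ∀ x y : Ed d, ‖fderiv ℝ φ x - fderiv ℝ φ y‖ ≤ H * ‖x - y‖ ^ α)
    (hCb : ∀ x, |φ x| ≤ Cb) (x y : Ed d) :
    |incr d (1/2) φ x y| ≤ (H + 2 * Cb) * (‖y‖ ^ α * min ‖y‖ 1) := by
  have hCb0 : 0 ≤ Cb := (abs_nonneg _).trans (hCb 0)
  rw [incr_half]
  split_ifs with hy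
  · calc |φ (x + y) - φ x - fderiv ℝ φ x y| ≤ H * ‖y‖ ^ α * ‖y‖ :=
          abs_sub_sub_fderiv_le hφ hH0 hα hH x y
      _ ≤ (H + 2 * Cb) * (‖y‖ ^ α * min ‖y‖ 1) := by
          rw [min_eq_left hy.le, ← mul_assoc]
          gcongr
          linarith
  · have hy1 : 1 ≤ ‖y‖ ^ α := Real.one_le_rpow (not_lt.1 hy) hα
    calc |φ (x + y) - φ x - 0| ≤ |φ (x + y)| + |φ x| := by rw [sub_zero]; exact abs_sub _ _
      _ ≤ (H + 2 * Cb) * (1 * 1) := by linarith [hCb (x + y), hCb x]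
      _ ≤ (H + 2 * Cb) * (‖y‖ ^ α * min ‖y‖ 1) := by
          rw [min_eq_right (not_lt.1 hy)]
          gcongr

end increment

section opL

variable {d : ℕ} {lam Lam ρ : ℝ} {K : Ed d → ℝ} {φ : Ed d → ℝ} {H α Cb : ℝ}

lemma abs_incr_half_le_of_mem_annulus (hφ : Differentiable ℝ φ) (hH0 : 0 ≤ H) (hα : 0 ≤ α)
    (hH : ∀ x y : Ed d, ‖fderiv ℝ φ x - fderiv ℝ φ y‖ ≤ H * ‖x - y‖ ^ α)
    (hCb : ∀ x, |φ x| ≤ Cb) (x : Ed d) {r : ℝ} {y : Ed d} (hy : y ∈ annulus d r) :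
    |incr d (1/2) φ x y| ≤ (H + 2 * Cb) * ((2 * r) ^ α * min (4 * r) 1) := by
  have hCb0 : 0 ≤ Cb := (abs_nonneg _).trans (hCb 0)
  obtain ⟨hr, hy2⟩ := mem_annulus.1 hy
  have hr0 : 0 < r := by linarith [norm_nonneg y]
  refine (abs_incr_half_le hφ hH0 hα hH hCb x y).trans ?_
  gcongr
  linarith

lemma integrable_incr_half_mul (hLam : 0 ≤ Lam) (hK : K ∈ KernelClass d (1/2) lam Lam ρ)
    (hφ : Differentiable ℝ φ) (hH0 : 0 ≤ H) (hα : α ∈ Ioo (0 : ℝ) 1)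
    (hH : ∀ x y : Ed d, ‖fderiv ℝ φ x - fderiv ℝ φ y‖ ≤ H * ‖x - y‖ ^ α)
    (hCb : ∀ x, |φ x| ≤ Cb) (x : Ed d) :
    Integrable fun y => incr d (1/2) φ x y * K y := by
  have hCb0 : 0 ≤ Cb := (abs_nonneg _).trans (hCb 0)
  refine integrable_mul_of_forall_annulus_le hLam hK (measurable_incr_half hφ.continuous x)
    (incr_half_zero x) (fun k => ?_)
    (fun k y hy => abs_incr_half_le_of_mem_annulus hφ hH0 hα.1.le hH hCb x hy)
    (((summable_annulusWeight hα zero_le_one).mul_left (Lam * (H + 2 * Cb))).congr fun k => ?_)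
  · have : 0 ≤ min (4 * (2 : ℝ) ^ k) 1 := le_min (by positivity) zero_le_one
    positivity
  · unfold annulusWeight
    ring

lemma abs_opL_half_le (hLam : 0 ≤ Lam) (hK : K ∈ KernelClass d (1/2) lam Lam ρ)
    (hφ : Differentiable ℝ φ) (hH0 : 0 ≤ H) (hα : α ∈ Ioo (0 : ℝ) 1)
    (hH : ∀ x y : Ed d, ‖fderiv ℝ φ x - fderiv ℝ φ y‖ ≤ H * ‖x - y‖ ^ α)
    (hCb : ∀ x, |φ x| ≤ Cb) (x : Ed d) :
    |opL d (1/2) K φ x| ≤ Lam * (H + 2 * Cb) * ∑' k : ℤ, annulusWeight α 1 (2 ^ k) := by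
  have hCb0 : 0 ≤ Cb := (abs_nonneg _).trans (hCb 0)
  rw [opL, ← tsum_mul_left]
  refine abs_integral_le_tsum_annulus (by rw [incr_half_zero, zero_mul])
    (integrable_incr_half_mul hLam hK hφ hH0 hα hH hCb x) (fun k => ?_)
    ((summable_annulusWeight hα zero_le_one).mul_left _)
  have : 0 ≤ min (4 * (2 : ℝ) ^ k) 1 := le_min (by positivity) zero_le_one
  refine (abs_setIntegral_mul_annulus_le hLam hK (by positivity) (by positivity)
    fun y hy => abs_incr_half_le_of_mem_annulus hφ hH0 hα.1.le hH hCb x hy).trans_eq ?_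
  unfold annulusWeight
  ring

lemma abs_setIntegral_sub_sub_sub_mul_annulus_le (hLam : 0 ≤ Lam)
    (hK : K ∈ KernelClass d (1/2) lam Lam ρ) (hφ : Differentiable ℝ φ) (hH0 : 0 ≤ H)
    (hα : 0 ≤ α) (hH : ∀ x y : Ed d, ‖fderiv ℝ φ x - fderiv ℝ φ y‖ ≤ H * ‖x - y‖ ^ α)
    (x x' : Ed d) {r : ℝ} (hr : 0 < r) :
    |∫ y in annulus d r, ((φ (x + y) - φ x) - (φ (x' + y) - φ x')) * K y| ≤
      Lam * H * annulusWeight α ‖x' - x‖ r := by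
  set E : Ed d → ℝ := fun y => (φ (x + y) - φ x) - (φ (x' + y) - φ x')
  set b : Ed d →L[ℝ] ℝ := fderiv ℝ φ x - fderiv ℝ φ x'
  have hφc := hφ.continuous
  have hEm : Measurable E := by fun_prop
  have hshift : ∀ y ∈ annulus d r, |E y| ≤ H * (2 * r) ^ α * ‖x' - x‖ := fun y hy => by
    rw [abs_sub_comm]
    refine (abs_sub_sub_sub_le hφ hH x x' y).trans ?_
    gcongr
    exact (mem_annulus.1 hy).2.le
  have htaylor : ∀ y ∈ annulus d r, |E y - b y| ≤ H * (2 * r) ^ α * (4 * r) := fun y hy => by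
    have hy := (mem_annulus.1 hy).2.le
    have h := abs_sub_sub_fderiv_le hφ hH0 hα hH x y
    have h' := abs_sub_sub_fderiv_le hφ hH0 hα hH x' y
    have : H * ‖y‖ ^ α * ‖y‖ ≤ H * (2 * r) ^ α * (2 * r) := by gcongr
    have hsplit : E y - b y = (φ (x + y) - φ x - fderiv ℝ φ x y)
        - (φ (x' + y) - φ x' - fderiv ℝ φ x' y) := by
      simp only [E, b, sub_apply]
      ring
    rw [hsplit]
    linarith [abs_sub (φ (x + y) - φ x - fderiv ℝ φ x y) (φ (x' + y) - φ x' - fderiv ℝ φ x' y)]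
  have hbK : IntegrableOn (fun y => b y * K y) (annulus d r) :=
    integrableOn_mul_annulus hK hr b.continuous.measurable (c := ‖b‖ * (2 * r)) (by positivity)
      fun y hy => (b.le_opNorm y).trans (by gcongr; exact (mem_annulus.1 hy).2.le)
  have hcancel : ∫ y in annulus d r, E y * K y = ∫ y in annulus d r, (E y - b y) * K y := by
    simp_rw [sub_mul]
    rw [integral_sub (integrableOn_mul_annulus hK hr hEm (by positivity) hshift) hbK,
      setIntegral_clm_mul_annulus_eq_zero hK hr b, sub_zero]
  have hsmall : |∫ y in annulus d r, E y * K y| ≤ H * (2 * r) ^ α * (4 * r) * (Lam / r) :=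
    hcancel ▸ abs_setIntegral_mul_annulus_le hLam hK hr (by positivity) htaylor
  have hlarge : |∫ y in annulus d r, E y * K y| ≤ H * (2 * r) ^ α * ‖x' - x‖ * (Lam / r) :=
    abs_setIntegral_mul_annulus_le hLam hK hr (by positivity) hshift
  calc |∫ y in annulus d r, E y * K y|
      ≤ min (H * (2 * r) ^ α * (4 * r) * (Lam / r)) (H * (2 * r) ^ α * ‖x' - x‖ * (Lam / r)) :=
        le_min hsmall hlarge
    _ = Lam * H * annulusWeight α ‖x' - x‖ r := by
        rw [← min_mul_of_nonneg _ _ (by positivity), ← mul_min_of_nonneg _ _ (by positivity)]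
        unfold annulusWeight
        ring

lemma setIntegral_incr_half_sub_mul_annulus (hK : K ∈ KernelClass d (1/2) lam Lam ρ)
    (x x' : Ed d) (k : ℤ)
    (hD : IntegrableOn (fun y => (incr d (1/2) φ x y - incr d (1/2) φ x' y) * K y)
      (annulus d (2 ^ k))) :
    ∫ y in annulus d (2 ^ k), (incr d (1/2) φ x y - incr d (1/2) φ x' y) * K y =
      ∫ y in annulus d (2 ^ k), ((φ (x + y) - φ x) - (φ (x' + y) - φ x')) * K y := by
  set b : Ed d →L[ℝ] ℝ := fderiv ℝ φ x - fderiv ℝ φ x'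
  have hℓK : IntegrableOn (fun y => (if ‖y‖ < 1 then b y else 0) * K y) (annulus d (2 ^ k)) :=
    integrableOn_mul_annulus hK (by positivity)
      (Measurable.ite (measurableSet_lt measurable_norm measurable_const) b.continuous.measurable
        measurable_const) (c := ‖b‖ * (2 * 2 ^ k)) (by positivity) fun y hy => by
      split_ifs
      · exact (b.le_opNorm y).trans (by gcongr; exact (mem_annulus.1 hy).2.le)
      · rw [abs_zero]; positivity
  have hpt : ∀ y, ((φ (x + y) - φ x) - (φ (x' + y) - φ x')) * K y =
      (incr d (1/2) φ x y - incr d (1/2) φ x' y) * K y + (if ‖y‖ < 1 then b y else 0) * K y := by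
    intro y
    rw [incr_half, incr_half]
    split_ifs
    · simp only [b, sub_apply]
      ring
    · ring
  simp_rw [hpt]
  rw [integral_add hD hℓK, setIntegral_ite_clm_mul_annulus_two_zpow_eq_zero hK k b, add_zero]

lemma abs_opL_half_sub_le (hLam : 0 ≤ Lam) (hK : K ∈ KernelClass d (1/2) lam Lam ρ)
    (hφ : Differentiable ℝ φ) (hH0 : 0 ≤ H) (hα : α ∈ Ioo (0 : ℝ) 1)
    (hH : ∀ x y : Ed d, ‖fderiv ℝ φ x - fderiv ℝ φ y‖ ≤ H * ‖x - y‖ ^ α)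
    (hCb : ∀ x, |φ x| ≤ Cb) (x x' : Ed d) :
    |opL d (1/2) K φ x - opL d (1/2) K φ x'| ≤
      Lam * H * (2 ^ α * (∑' k : ℤ, annulusWeight α 1 (2 ^ k)) * ‖x' - x‖ ^ α) := by
  have hI := integrable_incr_half_mul hLam hK hφ hH0 hα hH hCb x
  have hI' := integrable_incr_half_mul hLam hK hφ hH0 hα hH hCb x'
  have hDK : Integrable fun y => (incr d (1/2) φ x y - incr d (1/2) φ x' y) * K y := by
    simp_rw [sub_mul]
    exact hI.sub hI'
  rw [opL, opL, ← integral_sub hI hI']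
  simp_rw [← sub_mul]
  have hD0 : (incr d (1/2) φ x 0 - incr d (1/2) φ x' 0) * K 0 = 0 := by
    rw [incr_half_zero, incr_half_zero, sub_zero, zero_mul]
  refine (abs_integral_le_tsum_annulus hD0 hDK (fun k => ?_)
    ((summable_annulusWeight hα (norm_nonneg (x' - x))).mul_left (Lam * H))).trans ?_
  · rw [setIntegral_incr_half_sub_mul_annulus hK x x' k hDK.integrableOn]
    exact abs_setIntegral_sub_sub_sub_mul_annulus_le hLam hK hφ hH0 hα.1.le hH x x'
      (by positivity)
  · rw [tsum_mul_left]
    gcongr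
    exact tsum_annulusWeight_le hα (norm_nonneg (x' - x))

end opL

section extremal

variable {ι : Type*} {S : Set ι} {F G : ι → ℝ} {c : ℝ}

lemma csSup_image_le_csSup_image_add_s8 (hS : S.Nonempty) (hG : BddAbove (G '' S))
    (h : ∀ a ∈ S, F a ≤ G a + c) : sSup (F '' S) ≤ sSup (G '' S) + c := by
  refine csSup_le (hS.image F) ?_
  rintro _ ⟨a, ha, rfl⟩
  exact (h a ha).trans (by gcongr; exact le_csSup hG (mem_image_of_mem G ha))

lemma csInf_image_le_csInf_image_add (hS : S.Nonempty) (hF : BddBelow (F '' S))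
    (h : ∀ a ∈ S, F a ≤ G a + c) : sInf (F '' S) ≤ sInf (G '' S) + c := by
  rw [← sub_le_iff_le_add]
  refine le_csInf (hS.image G) ?_
  rintro _ ⟨a, ha, rfl⟩
  rw [sub_le_iff_le_add]
  exact (csInf_le hF (mem_image_of_mem F ha)).trans (h a ha)

lemma abs_csSup_image_sub_csSup_image_le (hc : 0 ≤ c) (hF : BddAbove (F '' S))
    (hG : BddAbove (G '' S)) (h : ∀ a ∈ S, |F a - G a| ≤ c) :
    |sSup (F '' S) - sSup (G '' S)| ≤ c := by
  rcases S.eq_empty_or_nonempty with rfl | hS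
  · simpa using hc
  have hFG := csSup_image_le_csSup_image_add_s8 (F := F) (c := c) hS hG fun a ha => by
    linarith [(abs_le.1 (h a ha)).2]
  have hGF := csSup_image_le_csSup_image_add_s8 (F := G) (c := c) hS hF fun a ha => by
    linarith [(abs_le.1 (h a ha)).1]
  rw [abs_sub_le_iff]
  constructor <;> linarith

lemma abs_csInf_image_sub_csInf_image_le (hc : 0 ≤ c) (hF : BddBelow (F '' S))
    (hG : BddBelow (G '' S)) (h : ∀ a ∈ S, |F a - G a| ≤ c) :
    |sInf (F '' S) - sInf (G '' S)| ≤ c := by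
  rcases S.eq_empty_or_nonempty with rfl | hS
  · simpa using hc
  have hFG := csInf_image_le_csInf_image_add (G := G) (c := c) hS hF fun a ha => by
    linarith [(abs_le.1 (h a ha)).2]
  have hGF := csInf_image_le_csInf_image_add (G := F) (c := c) hS hG fun a ha => by
    linarith [(abs_le.1 (h a ha)).1]
  rw [abs_sub_le_iff]
  constructor <;> linarith

end extremal

theorem statement8_general (d : ℕ) (Lam α : ℝ) (hLam : 0 < Lam) (hα : α ∈ Ioo (0:ℝ) 1) :
    ∃ C : ℝ, 0 < C ∧ ∀ lam ρ : ℝ, 0 < lam → lam ≤ Lam → 0 ≤ ρ →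
      ∀ φ : Ed d → ℝ, ContDiff ℝ 1 φ → (∃ Cb : ℝ, ∀ x, |φ x| ≤ Cb) →
        (∃ Cb' : ℝ, ∀ x, ‖fderiv ℝ φ x‖ ≤ Cb') →
      ∀ H : ℝ, 0 ≤ H → (∀ x y : Ed d, ‖fderiv ℝ φ x - fderiv ℝ φ y‖ ≤ H * ‖x - y‖ ^ α) →
        (∀ x : Ed d,
          BddBelow ((fun K => opL d (1/2) K φ x) '' KernelClass d (1/2) lam Lam ρ) ∧
          BddAbove ((fun K => opL d (1/2) K φ x) '' KernelClass d (1/2) lam Lam ρ)) ∧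
        ∀ x y : Ed d,
          |pucciInf d (1/2) lam Lam ρ φ x - pucciInf d (1/2) lam Lam ρ φ y| ≤
            C * H * ‖x - y‖ ^ α ∧
          |pucciSup d (1/2) lam Lam ρ φ x - pucciSup d (1/2) lam Lam ρ φ y| ≤
            C * H * ‖x - y‖ ^ α := by
  set S := ∑' k : ℤ, annulusWeight α 1 (2 ^ k)
  have hS : 0 < S := tsum_annulusWeight_pos hα
  refine ⟨2 ^ α * S * Lam, by positivity, fun lam ρ _ _ _ φ hφ ⟨Cb, hCb⟩ _ H hH0 hH => ?_⟩
  have hφ' : Differentiable ℝ φ := hφ.differentiable one_ne_zero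
  have hbdd : ∀ x, BddBelow ((fun K => opL d (1/2) K φ x) '' KernelClass d (1/2) lam Lam ρ) ∧
      BddAbove ((fun K => opL d (1/2) K φ x) '' KernelClass d (1/2) lam Lam ρ) := fun x => by
    have hbounded : Bornology.IsBounded
        ((fun K => opL d (1/2) K φ x) '' KernelClass d (1/2) lam Lam ρ) := by
      refine isBounded_iff_forall_norm_le.2 ⟨Lam * (H + 2 * Cb) * S, ?_⟩
      rintro _ ⟨K, hK, rfl⟩
      exact abs_opL_half_le hLam.le hK hφ' hH0 hα hH hCb x
    exact ⟨hbounded.bddBelow, hbounded.bddAbove⟩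
  refine ⟨hbdd, fun x y => ?_⟩
  have hdiff : ∀ K ∈ KernelClass d (1/2) lam Lam ρ,
      |opL d (1/2) K φ x - opL d (1/2) K φ y| ≤ 2 ^ α * S * Lam * H * ‖x - y‖ ^ α := by
    intro K hK
    refine (abs_opL_half_sub_le hLam.le hK hφ' hH0 hα hH hCb x y).trans_eq ?_
    rw [norm_sub_rev]
    ring
  have hc : 0 ≤ 2 ^ α * S * Lam * H * ‖x - y‖ ^ α := by positivity
  exact ⟨abs_csInf_image_sub_csInf_image_le hc (hbdd x).1 (hbdd y).1 hdiff,
    abs_csSup_image_sub_csSup_image_le hc (hbdd x).2 (hbdd y).2 hdiff⟩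

/-- for `s = 1/2` and `α ∈ (0,1)`, the Pucci operators map `C^{1,α}(ℝ^d)` to
`C^{0,α}(ℝ^d)` with a universal seminorm bound. -/
theorem statement8 (d : ℕ) (hd : 1 ≤ d) (Lam α : ℝ) (hLam : 0 < Lam) (hα : α ∈ Ioo (0:ℝ) 1) :
    ∃ C : ℝ, 0 < C ∧ ∀ lam ρ : ℝ, 0 < lam → lam ≤ Lam → 0 ≤ ρ →
      ∀ φ : Ed d → ℝ, ContDiff ℝ 1 φ → (∃ Cb : ℝ, ∀ x, |φ x| ≤ Cb) →
        (∃ Cb' : ℝ, ∀ x, ‖fderiv ℝ φ x‖ ≤ Cb') →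
      ∀ H : ℝ, 0 ≤ H → (∀ x y : Ed d, ‖fderiv ℝ φ x - fderiv ℝ φ y‖ ≤ H * ‖x - y‖ ^ α) →
        (∀ x : Ed d,
          BddBelow ((fun K => opL d (1/2) K φ x) '' KernelClass d (1/2) lam Lam ρ) ∧
          BddAbove ((fun K => opL d (1/2) K φ x) '' KernelClass d (1/2) lam Lam ρ)) ∧
        ∀ x y : Ed d,
          |pucciInf d (1/2) lam Lam ρ φ x - pucciInf d (1/2) lam Lam ρ φ y| ≤
            C * H * ‖x - y‖ ^ α ∧
          |pucciSup d (1/2) lam Lam ρ φ x - pucciSup d (1/2) lam Lam ρ φ y| ≤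
            C * H * ‖x - y‖ ^ α :=
  statement8_general d Lam α hLam hα
end
end
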